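/- arXiv:0710.0492 — 3 statements merged into one kernel-verified Lean document; each statement's English description precedes it below -/
import Mathlib

section
/- Let (X, μ) be a finite measure space, n ≥ 5 an integer and N = 2n/(n−4). Let u : X → ℝ be a nonnegative function with u ∈ L^N(μ), and let (v_m) be a sequence in L^N(μ) with sup_m ‖v_m‖_{L^N} < ∞ which converges strongly in L²(μ) to a function v ∈ L^N(μ). Then ∫_X u^{N−2}·|v_m² − v²| dμ → 0 as m → ∞. -/
/-!
By Hölder's inequality with the conjugate exponents `N / (N - 2)` and `N / 2`, the functions
`u ^ (N - 2) * (v_m ^ 2 - v ^ 2)` form a uniformly integrable family: the weight is a single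
`L^{N/(N-2)}` function and the differences of squares are bounded in `L^{N/2}`. Convergence in `L²`
gives convergence in measure of `v_m`, hence of these products to `0`, and Vitali's convergence
theorem upgrades this to convergence in `L¹`.
-/

open MeasureTheory Filter Topology
open scoped ENNReal NNReal

namespace ENNReal

theorem holderConjugate_div_div_of_add_eq {a b p : ℝ≥0∞} (hab : a + b = p) (hp₀ : p ≠ 0)
    (hp : p ≠ ∞) : HolderConjugate (p / a) (p / b) := by
  rw [holderConjugate_iff, ENNReal.inv_div (.inr hp) (.inr hp₀),
    ENNReal.inv_div (.inr hp) (.inr hp₀), ← ENNReal.add_div, hab, ENNReal.div_self hp₀ hp]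

end ENNReal

namespace MeasureTheory

variable {α : Type*} [MeasurableSpace α] {μ : Measure α}

theorem MemLp.rpow_of_nonneg {u : α → ℝ} {p : ℝ≥0∞} (hu : MemLp u p μ) (hu₀ : ∀ x, 0 ≤ u x)
    {r : ℝ} (hr : 0 ≤ r) : MemLp (fun x => u x ^ r) (p / ENNReal.ofReal r) μ := by
  have h := hu.norm_rpow_div (ENNReal.ofReal r)
  simp only [ENNReal.toReal_ofReal hr, Real.norm_of_nonneg (hu₀ _)] at h
  exact h

theorem eLpNorm_sq (w : α → ℝ) (p : ℝ≥0∞) :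
    eLpNorm (fun x => w x ^ 2) (p / 2) μ = eLpNorm w p μ ^ 2 := by
  have h := eLpNorm_norm_rpow w (p := p / 2) (μ := μ) two_pos
  simp only [Real.norm_eq_abs, Real.rpow_two, sq_abs, ENNReal.ofReal_ofNat,
    ENNReal.div_mul_cancel two_ne_zero ENNReal.ofNat_ne_top] at h
  exact_mod_cast h

theorem eLpNorm_sq_sub_sq_le {w v : α → ℝ} {p : ℝ≥0∞} (hp : 1 ≤ p / 2)
    (hw : AEStronglyMeasurable w μ) (hv : AEStronglyMeasurable v μ) :
    eLpNorm (fun x => w x ^ 2 - v x ^ 2) (p / 2) μ ≤ eLpNorm w p μ ^ 2 + eLpNorm v p μ ^ 2 := by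
  rw [← eLpNorm_sq, ← eLpNorm_sq]
  exact eLpNorm_sub_le (hw.pow 2) (hv.pow 2) hp

theorem unifIntegrable_smul_of_eLpNorm_le {ι 𝕜 E : Type*} [NormedRing 𝕜]
    [NormedAddCommGroup E] [MulActionWithZero 𝕜 E] [IsBoundedSMul 𝕜 E]
    {p q r : ℝ≥0∞} [ENNReal.HolderTriple p q r] (hp₁ : 1 ≤ p) (hp : p ≠ ∞)
    {φ : α → 𝕜} (hφ : MemLp φ p μ) {f : ι → α → E} (hf : ∀ i, AEStronglyMeasurable (f i) μ)
    {C : ℝ≥0∞} (hC : C ≠ ∞) (hfC : ∀ i, eLpNorm (f i) q μ ≤ C) :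
    UnifIntegrable (fun i => φ • f i) r μ := by
  intro ε hε
  obtain ⟨η, hη, hηC⟩ := ENNReal.exists_nnreal_pos_mul_lt hC (ENNReal.ofReal_pos.2 hε).ne'
  obtain ⟨δ, hδ, hφδ⟩ := hφ.eLpNorm_indicator_le hp₁ hp (ε := η) hη
  refine ⟨δ, hδ, fun i s hs hμs => ?_⟩
  calc eLpNorm (s.indicator (φ • f i)) r μ = eLpNorm (s.indicator φ • f i) r μ := by
        congr 1; exact Set.indicator_smul_left s φ (f i)
    _ ≤ eLpNorm (s.indicator φ) p μ * eLpNorm (f i) q μ :=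
        eLpNorm_smul_le_mul_eLpNorm (hf i) (hφ.1.indicator hs)
    _ ≤ η * C := by
        gcongr
        · simpa using hφδ s hs hμs
        · exact hfC i
    _ ≤ ENNReal.ofReal ε := hηC.le

theorem TendstoInMeasure.comp_continuousAt [IsFiniteMeasure μ] {E F : Type*}
    [NormedAddCommGroup E] [NormedAddCommGroup F]
    {f : ℕ → α → E} {g : α → E} (hfg : TendstoInMeasure μ f atTop g) {Φ : α → E → F}
    (hΦ : ∀ x, ContinuousAt (Φ x) (g x))
    (hmeas : ∀ n, AEStronglyMeasurable (fun x => Φ x (f n x)) μ) :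
    TendstoInMeasure μ (fun n x => Φ x (f n x)) atTop (fun x => Φ x (g x)) := by
  refine (exists_seq_tendstoInMeasure_atTop_iff hmeas).2 fun ns hns => ?_
  obtain ⟨ms, hms, hae⟩ := (hfg.comp hns.tendsto_atTop).exists_seq_tendsto_ae
  exact ⟨ms, hms, hae.mono fun x hx => (hΦ x).tendsto.comp hx⟩

theorem tendsto_integral_norm_of_tendsto_eLpNorm_one {ι E : Type*} [NormedAddCommGroup E]
    {l : Filter ι} {f : ι → α → E} (hf : ∀ i, AEStronglyMeasurable (f i) μ)
    (h : Tendsto (fun i => eLpNorm (f i) 1 μ) l (𝓝 0)) :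
    Tendsto (fun i => ∫ x, ‖f i x‖ ∂μ) l (𝓝 0) := by
  simp_rw [integral_norm_eq_lintegral_enorm (hf _), ← eLpNorm_one_eq_lintegral_enorm]
  exact (ENNReal.tendsto_toReal ENNReal.zero_ne_top).comp h

theorem tendsto_integral_rpow_mul_abs_sq_sub_sq [IsFiniteMeasure μ] {N : ℝ} (hN : 2 < N)
    {u v : α → ℝ} {vm : ℕ → α → ℝ} (hu₀ : ∀ x, 0 ≤ u x) (hu : MemLp u (ENNReal.ofReal N) μ)
    (hv : MemLp v (ENNReal.ofReal N) μ) (hvm : ∀ m, AEStronglyMeasurable (vm m) μ)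
    {C : ℝ≥0∞} (hC : C ≠ ∞) (hvmC : ∀ m, eLpNorm (vm m) (ENNReal.ofReal N) μ ≤ C)
    (hvmv : TendstoInMeasure μ vm atTop v) :
    Tendsto (fun m => ∫ x, u x ^ (N - 2) * |vm m x ^ 2 - v x ^ 2| ∂μ) atTop (𝓝 0) := by
  set P := ENNReal.ofReal N
  have hweight : MemLp (fun x => u x ^ (N - 2)) (P / ENNReal.ofReal (N - 2)) μ :=
    hu.rpow_of_nonneg hu₀ (by linarith)
  have : ENNReal.HolderConjugate (P / ENNReal.ofReal (N - 2)) (P / 2) :=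
    ENNReal.holderConjugate_div_div_of_add_eq
      (by rw [← ENNReal.ofReal_ofNat 2, ← ENNReal.ofReal_add (by linarith) zero_le_two,
        sub_add_cancel])
      (ENNReal.ofReal_pos.2 (by linarith)).ne' ENNReal.ofReal_ne_top
  set F : ℕ → α → ℝ := fun m => (fun x => u x ^ (N - 2)) • fun x => vm m x ^ 2 - v x ^ 2
  have hsq : ∀ m, AEStronglyMeasurable (fun x => vm m x ^ 2 - v x ^ 2) μ := fun m =>
    ((hvm m).pow 2).sub (hv.1.pow 2)
  have hFmeas : ∀ m, AEStronglyMeasurable (F m) μ := fun m => hweight.1.smul (hsq m)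
  have hsq_le :
      ∀ m, eLpNorm (fun x => vm m x ^ 2 - v x ^ 2) (P / 2) μ ≤ C ^ 2 + eLpNorm v P μ ^ 2 := fun m =>
    (eLpNorm_sq_sub_sq_le (ENNReal.HolderConjugate.one_le _ (P / ENNReal.ofReal (N - 2)))
      (hvm m) hv.1).trans (by gcongr; exact hvmC m)
  have hui : UnifIntegrable F 1 μ :=
    unifIntegrable_smul_of_eLpNorm_le (q := P / 2) (ENNReal.HolderConjugate.one_le _ (P / 2))
      (ENNReal.div_ne_top ENNReal.ofReal_ne_top (ENNReal.ofReal_pos.2 (by linarith)).ne')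
      hweight hsq (ENNReal.add_ne_top.2 ⟨ENNReal.pow_ne_top hC, ENNReal.pow_ne_top hv.2.ne⟩)
      hsq_le
  have hF0 : TendstoInMeasure μ F atTop 0 := by
    have h := hvmv.comp_continuousAt (Φ := fun x y => u x ^ (N - 2) * (y ^ 2 - v x ^ 2))
      (fun x => by fun_prop) hFmeas
    simp only [sub_self, mul_zero] at h
    exact h
  have hF_L1 := tendsto_Lp_finite_of_tendstoInMeasure le_rfl ENNReal.one_ne_top hFmeas MemLp.zero
    hui hF0
  simp only [sub_zero] at hF_L1
  refine (tendsto_integral_norm_of_tendsto_eLpNorm_one hFmeas hF_L1).congr fun m => ?_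
  refine integral_congr_ae (Eventually.of_forall fun x => ?_)
  simp [F, abs_of_nonneg (Real.rpow_nonneg (hu₀ x) _)]

end MeasureTheory

/-- On a finite measure space, if `u ≥ 0` is in `L^N` with `N = 2n/(n−4)`,
`(v_m)` is a sequence in `L^N` bounded in `L^N` norm which converges strongly in `L²`
to `v ∈ L^N`, then `∫ u^{N−2} |v_m² − v²| dμ → 0`. -/
theorem int_weight_sq_diff_tendsto_zero
    {X : Type*} [MeasurableSpace X] (μ : Measure X) [IsFiniteMeasure μ]
    (n : ℕ) (hn : 5 ≤ n) (N : ℝ) (hN : N = 2 * n / (n - 4))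
    (u : X → ℝ) (hu0 : ∀ x, 0 ≤ u x) (huN : MemLp u (ENNReal.ofReal N) μ)
    (v : X → ℝ) (hv : MemLp v (ENNReal.ofReal N) μ)
    (vm : ℕ → X → ℝ) (hvm : ∀ m, MemLp (vm m) (ENNReal.ofReal N) μ)
    (hbound : ∃ C : ℝ≥0∞, C < ⊤ ∧ ∀ m, eLpNorm (vm m) (ENNReal.ofReal N) μ ≤ C)
    (hL2 : Tendsto (fun m => eLpNorm (fun x => vm m x - v x) 2 μ) atTop (𝓝 0)) :
    Tendsto (fun m => ∫ x, u x ^ (N - 2) * |(vm m x) ^ 2 - (v x) ^ 2| ∂μ)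
      atTop (𝓝 0) := by
  obtain ⟨C, hC, hvmC⟩ := hbound
  have hN2 : 2 < N := by
    have h4 : (4 : ℝ) < n := by exact_mod_cast hn
    rw [hN, lt_div_iff₀ (by linarith)]
    linarith
  exact tendsto_integral_rpow_mul_abs_sq_sub_sq hN2 hu0 huN hv (fun m => (hvm m).1) hC.ne hvmC
    (tendstoInMeasure_of_tendsto_eLpNorm two_ne_zero (fun m => (hvm m).1) hv.1 hL2)
end

section
/- Let (X, μ) be a finite measure space, n ≥ 5 an integer and N = 2n/(n−4). Let u : X → ℝ be a nonnegative function with u ∈ L^N(μ), and let (w_m) be a sequence in L^N(μ) with sup_m ‖w_m‖_{L^N} < ∞ which converges strongly in L²(μ) to w ∈ L^N(μ). Then the functions u^{N−2}·(w_m² − (w_m − w)²) converge in L¹(μ) to u^{N−2}·w²; in particular ∫_X u^{N−2}(w_m² − (w_m − w)²) dμ → ∫_X u^{N−2} w² dμ. -/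
open MeasureTheory Filter Topology
open scoped ENNReal

/-!
Expanding the square, the integrand of the first limit is `2 F (w_m - w)` with
`F = u^{N-2} w ∈ L^{N'}`, `N' = N/(N-1)`, by Hölder. The differences `h_m = w_m - w` are
bounded in `L^N` and tend to `0` in `L¹`. Approximate `F` in `L^{N'}` by a simple, hence
bounded, function `g`: then `‖g h_m‖₁ ≤ ‖g‖_∞ ‖h_m‖₁ → 0`, while
`‖(F - g) h_m‖₁ ≤ ‖F - g‖_{N'} sup_m ‖h_m‖_N` is uniformly small.
-/

namespace ENNReal

theorem holderTriple_div_ofReal {p : ℝ≥0∞} (hp₀ : p ≠ 0) (hp : p ≠ ∞) {a b : ℝ}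
    (ha : 0 ≤ a) (hb : 0 ≤ b) :
    HolderTriple (p / .ofReal a) (p / .ofReal b) (p / .ofReal (a + b)) where
  inv_add_inv_eq_inv := by
    simp only [ENNReal.inv_div (.inr hp) (.inr hp₀), ENNReal.div_add_div_same, ofReal_add ha hb]

theorem holderConjugate_div_ofReal_sub_one {N : ℝ} (hN : 1 < N) :
    (ENNReal.ofReal N / .ofReal (N - 1)).HolderConjugate (.ofReal N) := by
  have hN₀ : ENNReal.ofReal N ≠ 0 := by simp; linarith
  simpa [ENNReal.div_self hN₀ ofReal_ne_top] using
    holderTriple_div_ofReal hN₀ ofReal_ne_top (a := N - 1) (by linarith) zero_le_one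

end ENNReal

namespace MeasureTheory

variable {X : Type*} [MeasurableSpace X] {μ : Measure X}

theorem MemLp.rpow_const {u : X → ℝ} {p : ℝ≥0∞} (hu : MemLp u p μ) {s : ℝ} (hs : 0 ≤ s) :
    MemLp (fun x => u x ^ s) (p / ENNReal.ofReal s) μ := by
  have h := hu.norm_rpow_div (ENNReal.ofReal s)
  rw [ENNReal.toReal_ofReal hs] at h
  refine h.mono ((Real.continuous_rpow_const hs).comp_aestronglyMeasurable hu.1) ?_
  refine .of_forall fun x => ?_
  simpa [Real.norm_eq_abs, abs_of_nonneg (Real.rpow_nonneg (abs_nonneg _) s)]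
    using Real.abs_rpow_le_abs_rpow (u x) s

theorem MemLp.rpow_sub_two_mul {N : ℝ} (hN : 2 ≤ N) {u w : X → ℝ}
    (hu : MemLp u (ENNReal.ofReal N) μ) (hw : MemLp w (ENNReal.ofReal N) μ) :
    MemLp (fun x => u x ^ (N - 2) * w x) (ENNReal.ofReal N / .ofReal (N - 1)) μ := by
  have hN₀ : ENNReal.ofReal N ≠ 0 := by simp; linarith
  have : (ENNReal.ofReal N / .ofReal (N - 2)).HolderTriple (.ofReal N)
      (ENNReal.ofReal N / .ofReal (N - 1)) := by
    simpa [show N - 2 + 1 = N - 1 by ring] using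
      ENNReal.holderTriple_div_ofReal hN₀ ENNReal.ofReal_ne_top (a := N - 2) (by linarith)
        zero_le_one
  exact hw.mul' (hu.rpow_const (by linarith))

theorem tendsto_eLpNorm_of_tendsto_eLpNorm_of_le [IsFiniteMeasure μ] {ι : Type*} {l : Filter ι}
    {p q : ℝ≥0∞} (hp : p ≠ 0) (hpq : p ≤ q) {h : ι → X → ℝ} (hh : ∀ i, AEStronglyMeasurable (h i) μ)
    (hlim : Tendsto (fun i => eLpNorm (h i) q μ) l (𝓝 0)) :
    Tendsto (fun i => eLpNorm (h i) p μ) l (𝓝 0) := by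
  have hc : μ Set.univ ^ (1 / p.toReal - 1 / q.toReal) ≠ ∞ := by
    refine ENNReal.rpow_ne_top_of_nonneg (sub_nonneg.2 ?_) (measure_ne_top μ _)
    rcases eq_or_ne q ∞ with rfl | hq
    · simp
    exact one_div_le_one_div_of_le (ENNReal.toReal_pos hp (ne_top_of_le_ne_top hq hpq))
      (ENNReal.toReal_mono hq hpq)
  refine tendsto_of_tendsto_of_tendsto_of_le_of_le tendsto_const_nhds
    (by simpa using ENNReal.Tendsto.mul_const hlim (Or.inr hc)) (fun _ => zero_le)
    fun i => eLpNorm_le_eLpNorm_mul_rpow_measure_univ hpq (hh i)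

theorem tendsto_eLpNorm_mul_of_memLp_top {ι : Type*} {l : Filter ι} {g : X → ℝ}
    (hg : MemLp g ∞ μ) {h : ι → X → ℝ} (hh : ∀ i, AEStronglyMeasurable (h i) μ)
    (hlim : Tendsto (fun i => eLpNorm (h i) 1 μ) l (𝓝 0)) :
    Tendsto (fun i => eLpNorm (g * h i) 1 μ) l (𝓝 0) :=
  tendsto_of_tendsto_of_tendsto_of_le_of_le tendsto_const_nhds
    (by simpa using ENNReal.Tendsto.const_mul hlim (Or.inr hg.eLpNorm_ne_top)) (fun _ => zero_le)
    fun i => eLpNorm_smul_le_eLpNorm_top_mul_eLpNorm 1 (hh i) g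

theorem tendsto_eLpNorm_mul_of_tendsto_eLpNorm_one {ι : Type*} {l : Filter ι} {p q : ℝ≥0∞}
    [q.HolderConjugate p] (hq : q ≠ ∞) {F : X → ℝ} (hF : MemLp F q μ) {h : ι → X → ℝ}
    (hh : ∀ i, AEStronglyMeasurable (h i) μ) {D : ℝ≥0∞} (hD : D ≠ ∞)
    (hbound : ∀ i, eLpNorm (h i) p μ ≤ D)
    (hlim : Tendsto (fun i => eLpNorm (h i) 1 μ) l (𝓝 0)) :
    Tendsto (fun i => eLpNorm (F * h i) 1 μ) l (𝓝 0) := by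
  rw [ENNReal.tendsto_nhds_zero]
  intro ε hε
  have hε2 : ε / 2 ≠ 0 := (ENNReal.half_pos hε.ne').ne'
  obtain ⟨δ, hδ, hδD⟩ := ENNReal.exists_nnreal_pos_mul_lt hD hε2
  obtain ⟨g, hFg, -⟩ := hF.exists_simpleFunc_eLpNorm_sub_lt hq (ENNReal.coe_pos.2 hδ).ne'
  have hg := tendsto_eLpNorm_mul_of_memLp_top (g.memLp_top μ) hh hlim
  filter_upwards [hg.eventually_le_const (ENNReal.half_pos hε.ne')] with i hi
  calc eLpNorm (F * h i) 1 μ = eLpNorm ((F - ⇑g) * h i + ⇑g * h i) 1 μ := by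
        rw [sub_mul, sub_add_cancel]
    _ ≤ eLpNorm ((F - ⇑g) * h i) 1 μ + eLpNorm (⇑g * h i) 1 μ :=
        eLpNorm_add_le ((hF.1.sub g.aestronglyMeasurable).mul (hh i))
          (g.aestronglyMeasurable.mul (hh i)) le_rfl
    _ ≤ eLpNorm (F - ⇑g) q μ * eLpNorm (h i) p μ + ε / 2 :=
        add_le_add (eLpNorm_smul_le_mul_eLpNorm (𝕜 := ℝ) (hh i)
          (hF.1.sub g.aestronglyMeasurable)) hi
    _ ≤ ε / 2 + ε / 2 := by
        gcongr
        exact (mul_le_mul' hFg.le (hbound i)).trans hδD.le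
    _ = ε := ENNReal.add_halves ε

theorem tendsto_integral_abs_of_tendsto_eLpNorm_one {ι : Type*} {l : Filter ι} {φ : ι → X → ℝ}
    (hφ : ∀ i, AEStronglyMeasurable (φ i) μ)
    (hlim : Tendsto (fun i => eLpNorm (φ i) 1 μ) l (𝓝 0)) :
    Tendsto (fun i => ∫ x, |φ i x| ∂μ) l (𝓝 0) := by
  have := (ENNReal.tendsto_toReal ENNReal.zero_ne_top).comp hlim
  refine this.congr fun i => ?_
  simp [eLpNorm_one_eq_lintegral_enorm, ← integral_norm_eq_lintegral_enorm (hφ i)]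

end MeasureTheory

theorem two_lt_two_mul_div_sub_four {n : ℕ} (hn : 5 ≤ n) : 2 < 2 * (n : ℝ) / (n - 4) := by
  have hn4 : (0 : ℝ) < n - 4 := by linarith [show (5 : ℝ) ≤ n by exact_mod_cast hn]
  rw [lt_div_iff₀ hn4]
  linarith

theorem brezis_lieb_type_convergence_general
    {X : Type*} [MeasurableSpace X] (μ : Measure X) [IsFiniteMeasure μ]
    (n : ℕ) (hn : 5 ≤ n) (N : ℝ) (hN : N = 2 * n / (n - 4))
    (u : X → ℝ) (huN : MemLp u (ENNReal.ofReal N) μ)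
    (w : X → ℝ) (hw : MemLp w (ENNReal.ofReal N) μ)
    (wm : ℕ → X → ℝ) (hwm : ∀ m, MemLp (wm m) (ENNReal.ofReal N) μ)
    (hbound : ∃ C : ℝ≥0∞, C < ⊤ ∧ ∀ m, eLpNorm (wm m) (ENNReal.ofReal N) μ ≤ C)
    (hL2 : Tendsto (fun m => eLpNorm (fun x => wm m x - w x) 2 μ) atTop (𝓝 0)) :
    Tendsto (fun m => ∫ x,
        |u x ^ (N - 2) * ((wm m x) ^ 2 - (wm m x - w x) ^ 2)
          - u x ^ (N - 2) * (w x) ^ 2| ∂μ) atTop (𝓝 0) ∧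
    Tendsto (fun m => ∫ x, u x ^ (N - 2) * ((wm m x) ^ 2 - (wm m x - w x) ^ 2) ∂μ)
      atTop (𝓝 (∫ x, u x ^ (N - 2) * (w x) ^ 2 ∂μ)) := by
  obtain ⟨C, hC, hwmC⟩ := hbound
  have hN2 : 2 < N := hN ▸ two_lt_two_mul_div_sub_four hn
  have := ENNReal.holderConjugate_div_ofReal_sub_one (N := N) (by linarith)
  set p := ENNReal.ofReal N
  set F : X → ℝ := fun x => u x ^ (N - 2) * w x
  set G₀ : X → ℝ := fun x => u x ^ (N - 2) * (w x) ^ 2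
  set G : ℕ → X → ℝ := fun m x => u x ^ (N - 2) * ((wm m x) ^ 2 - (wm m x - w x) ^ 2)
  have hF : MemLp F (p / .ofReal (N - 1)) μ := huN.rpow_sub_two_mul hN2.le hw
  have hGG₀ : ∀ m, G m - G₀ = (2 : ℝ) • (F * (wm m - w)) := fun m => by
    funext x; simp only [G, G₀, F, Pi.sub_apply, Pi.smul_apply, Pi.mul_apply, smul_eq_mul]; ring
  have hL1 : Tendsto (fun m => eLpNorm (wm m - w) 1 μ) atTop (𝓝 0) :=
    tendsto_eLpNorm_of_tendsto_eLpNorm_of_le one_ne_zero one_le_two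
      (fun m => (hwm m).1.sub hw.1) hL2
  have hbd : ∀ m, eLpNorm (wm m - w) p μ ≤ C + eLpNorm w p μ := fun m =>
    (eLpNorm_sub_le (hwm m).1 hw.1 (ENNReal.one_le_ofReal.2 (by linarith))).trans
      (add_le_add_left (hwmC m) _)
  have hFh : Tendsto (fun m => eLpNorm (F * (wm m - w)) 1 μ) atTop (𝓝 0) :=
    tendsto_eLpNorm_mul_of_tendsto_eLpNorm_one
      (ENNReal.div_ne_top ENNReal.ofReal_ne_top (by simp; linarith)) hF
      (fun m => (hwm m).1.sub hw.1) (ENNReal.add_ne_top.2 ⟨hC.ne, hw.eLpNorm_ne_top⟩) hbd hL1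
  have hlim : Tendsto (fun m => eLpNorm (G m - G₀) 1 μ) atTop (𝓝 0) := by
    simp_rw [hGG₀, eLpNorm_const_smul]
    simpa using ENNReal.Tendsto.const_mul hFh (Or.inr (by simp))
  have hG₀ : Integrable G₀ μ :=
    (memLp_one_iff_integrable.1 (hw.mul' hF)).congr (.of_forall fun x => by simp only [F, G₀]; ring)
  have hG : ∀ m, Integrable (G m) μ := fun m => by
    rw [← sub_add_cancel (G m) G₀, hGG₀ m]
    exact ((memLp_one_iff_integrable.1 (((hwm m).sub hw).mul hF)).smul (2 : ℝ)).add hG₀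
  exact ⟨tendsto_integral_abs_of_tendsto_eLpNorm_one (fun m => ((hG m).sub hG₀).1) hlim,
    tendsto_integral_of_L1' G₀ hG₀.1 (.of_forall hG) hlim⟩

/-- Brezis–Lieb type convergence. On a finite measure space, if `u ≥ 0`
is in `L^N` with `N = 2n/(n−4)`, and `(w_m)` is a sequence in `L^N` bounded in `L^N`
norm converging strongly in `L²` to `w ∈ L^N`, then
`u^{N−2}·(w_m² − (w_m − w)²) → u^{N−2}·w²` in `L¹(μ)`; in particular the integrals
converge. -/
theorem brezis_lieb_type_convergence
    {X : Type*} [MeasurableSpace X] (μ : Measure X) [IsFiniteMeasure μ]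
    (n : ℕ) (hn : 5 ≤ n) (N : ℝ) (hN : N = 2 * n / (n - 4))
    (u : X → ℝ) (hu0 : ∀ x, 0 ≤ u x) (huN : MemLp u (ENNReal.ofReal N) μ)
    (w : X → ℝ) (hw : MemLp w (ENNReal.ofReal N) μ)
    (wm : ℕ → X → ℝ) (hwm : ∀ m, MemLp (wm m) (ENNReal.ofReal N) μ)
    (hbound : ∃ C : ℝ≥0∞, C < ⊤ ∧ ∀ m, eLpNorm (wm m) (ENNReal.ofReal N) μ ≤ C)
    (hL2 : Tendsto (fun m => eLpNorm (fun x => wm m x - w x) 2 μ) atTop (𝓝 0)) :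
    Tendsto (fun m => ∫ x,
        |u x ^ (N - 2) * ((wm m x) ^ 2 - (wm m x - w x) ^ 2)
          - u x ^ (N - 2) * (w x) ^ 2| ∂μ) atTop (𝓝 0) ∧
    Tendsto (fun m => ∫ x, u x ^ (N - 2) * ((wm m x) ^ 2 - (wm m x - w x) ^ 2) ∂μ)
      atTop (𝓝 (∫ x, u x ^ (N - 2) * (w x) ^ 2 ∂μ)) :=
  brezis_lieb_type_convergence_general μ n hn N hN u huN w hw wm hwm hbound hL2
end

section
/- Let (X, μ) be a measure space, n ≥ 5 an integer and N = 2n/(n−4). Let u : X → ℝ be a nonnegative measurable function with ∫_X u^N dμ = 1. Suppose v₁, v₂ ∈ L^N(μ) satisfy v₁·v₂ = 0 μ-almost everywhere, and ∫_X u^{N−2} v_i² dμ = 1 for i = 1, 2. Then max( ‖v₁‖_{L^N}², ‖v₂‖_{L^N}² ) ≥ 2^{4/n}. -/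
/-!
Let `Sᵢ` be the support of `vᵢ` and `aᵢ = ∫_{Sᵢ} u^N`. Hölder's inequality on `Sᵢ` with the
conjugate exponents `N/(N-2)` and `N/2` gives `1 = ∫ u^{N-2} vᵢ² ≤ aᵢ^{4/n} ‖vᵢ‖_N²`. The supports
are almost disjoint, so `a₁ + a₂ ≤ ∫ u^N = 1`; hence some `aᵢ ≤ 1/2`, and then `‖vᵢ‖_N² ≥ 2^{4/n}`.
-/

open MeasureTheory Function
open scoped ENNReal

section
variable {X : Type*} [MeasurableSpace X] {μ : Measure X}

theorem aedisjoint_support_of_ae_mul_eq_zero {f g : X → ℝ} (h : ∀ᵐ x ∂μ, f x * g x = 0) :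
    AEDisjoint μ (support f) (support g) := by
  rw [AEDisjoint, ← support_mul]
  exact ae_iff.mp h

theorem setIntegral_add_setIntegral_le_integral {f : X → ℝ} {s t : Set X} (hf : Integrable f μ)
    (hf0 : 0 ≤ᵐ[μ] f) (hst : AEDisjoint μ s t) (ht : NullMeasurableSet t μ) :
    ∫ x in s, f x ∂μ + ∫ x in t, f x ∂μ ≤ ∫ x, f x ∂μ := by
  rw [← setIntegral_union₀ hst ht hf.integrableOn hf.integrableOn]
  exact setIntegral_le_integral hf hf0

theorem MeasureTheory.MemLp.toReal_eLpNorm_sq {N : ℝ} (hN : 0 < N) {v : X → ℝ}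
    (hv : MemLp v (ENNReal.ofReal N) μ) :
    (eLpNorm v (ENNReal.ofReal N) μ).toReal ^ 2 = (∫ x, |v x| ^ N ∂μ) ^ (2 / N) := by
  rw [hv.eLpNorm_eq_integral_rpow_norm (ENNReal.ofReal_pos.mpr hN).ne' ENNReal.ofReal_ne_top,
    ENNReal.toReal_ofReal (by positivity), ENNReal.toReal_ofReal hN.le,
    ← Real.rpow_natCast, ← Real.rpow_mul (by positivity)]
  simp only [Real.norm_eq_abs]
  congr 1
  push_cast
  ring

theorem integral_rpow_mul_sq_le {N : ℝ} (hN : 2 < N) {u v : X → ℝ} (hu0 : ∀ x, 0 ≤ u x)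
    (hu : MemLp u (ENNReal.ofReal N) μ) (hv : MemLp v (ENNReal.ofReal N) μ) :
    ∫ x, u x ^ (N - 2) * v x ^ 2 ∂μ ≤
      (∫ x, u x ^ N ∂μ) ^ ((N - 2) / N) * (∫ x, |v x| ^ N ∂μ) ^ (2 / N) := by
  have hN2 : 0 < N - 2 := by linarith
  have hpq : (N / (N - 2)).HolderConjugate (N / 2) := by
    rw [Real.holderConjugate_iff_eq_conjExponent (by rw [lt_div_iff₀ hN2]; linarith)]
    field_simp
    ring
  have hf : MemLp (fun x => u x ^ (N - 2)) (ENNReal.ofReal (N / (N - 2))) μ := by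
    have := hu.norm_rpow_div (ENNReal.ofReal (N - 2))
    rw [← ENNReal.ofReal_div_of_pos hN2, ENNReal.toReal_ofReal hN2.le] at this
    simpa [Real.norm_eq_abs, abs_of_nonneg (hu0 _)] using this
  have hg : MemLp (fun x => v x ^ 2) (ENNReal.ofReal (N / 2)) μ := by
    have := hv.norm_rpow_div (ENNReal.ofReal 2)
    rw [← ENNReal.ofReal_div_of_pos two_pos, ENNReal.toReal_ofReal zero_le_two] at this
    simpa [Real.norm_eq_abs] using this
  have holder := integral_mul_le_Lp_mul_Lq_of_nonneg hpq
    (ae_of_all _ fun x => Real.rpow_nonneg (hu0 x) _) (ae_of_all _ fun x => sq_nonneg (v x)) hf hg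
  have hu_pow : ∀ x, (u x ^ (N - 2)) ^ (N / (N - 2)) = u x ^ N := fun x => by
    rw [← Real.rpow_mul (hu0 x), mul_div_cancel₀ _ hN2.ne']
  have hv_pow : ∀ x, (v x ^ 2) ^ (N / 2) = |v x| ^ N := fun x => by
    rw [← sq_abs, ← Real.rpow_two, ← Real.rpow_mul (abs_nonneg _), mul_div_cancel₀ _ two_ne_zero]
  simpa only [hu_pow, hv_pow, one_div_div] using holder

theorem integral_rpow_mul_sq_le_on_support {N : ℝ} (hN : 2 < N) {u v : X → ℝ}
    (hu0 : ∀ x, 0 ≤ u x) (hu : MemLp u (ENNReal.ofReal N) μ) (hv : MemLp v (ENNReal.ofReal N) μ) :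
    ∫ x, u x ^ (N - 2) * v x ^ 2 ∂μ ≤
      (∫ x in support v, u x ^ N ∂μ) ^ ((N - 2) / N) *
        (eLpNorm v (ENNReal.ofReal N) μ).toReal ^ 2 := by
  have h := integral_rpow_mul_sq_le hN hu0 (hu.restrict (support v)) (hv.restrict (support v))
  have hvanish : ∀ x ∉ support v, v x = 0 := fun x => notMem_support.mp
  have hlhs : ∫ x in support v, u x ^ (N - 2) * v x ^ 2 ∂μ = ∫ x, u x ^ (N - 2) * v x ^ 2 ∂μ :=
    setIntegral_eq_integral_of_forall_compl_eq_zero fun x hx => by simp [hvanish x hx]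
  have hnorm : ∫ x in support v, |v x| ^ N ∂μ = ∫ x, |v x| ^ N ∂μ :=
    setIntegral_eq_integral_of_forall_compl_eq_zero fun x hx => by
      simp [hvanish x hx, (by linarith : N ≠ 0)]
  rwa [hlhs, hnorm, ← hv.toReal_eLpNorm_sq (by linarith)] at h

end

theorem two_rpow_le_of_one_le_rpow_mul {r a A : ℝ} (hr : 0 ≤ r) (ha : 0 ≤ a) (ha2 : a ≤ 1 / 2)
    (h : 1 ≤ a ^ r * A) : 2 ^ r ≤ A := by
  have hA : 0 ≤ A := by nlinarith [Real.rpow_nonneg ha r]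
  calc (2 : ℝ) ^ r ≤ 2 ^ r * (a ^ r * A) := le_mul_of_one_le_right (by positivity) h
    _ = (2 * a) ^ r * A := by rw [Real.mul_rpow zero_le_two ha, mul_assoc]
    _ ≤ 1 * A := by gcongr; exact Real.rpow_le_one (by positivity) (by linarith) hr
    _ = A := one_mul A

theorem two_rpow_le_max_of_add_le_one {r a b A B : ℝ} (hr : 0 ≤ r) (ha : 0 ≤ a) (hb : 0 ≤ b)
    (hab : a + b ≤ 1) (hA : 1 ≤ a ^ r * A) (hB : 1 ≤ b ^ r * B) : 2 ^ r ≤ max A B := by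
  rcases le_total a (1 / 2) with h | h
  · exact (two_rpow_le_of_one_le_rpow_mul hr ha h hA).trans (le_max_left A B)
  · exact (two_rpow_le_of_one_le_rpow_mul hr hb (by linarith) hB).trans (le_max_right A B)

/-- With `N = 2n/(n−4)`, if `u ≥ 0` is measurable with `∫ u^N dμ = 1`,
and `v₁, v₂ ∈ L^N(μ)` have `v₁·v₂ = 0` a.e. and `∫ u^{N−2} v_i² dμ = 1` for `i = 1,2`,
then `max(‖v₁‖_{L^N}², ‖v₂‖_{L^N}²) ≥ 2^{4/n}`. -/
theorem disjoint_supports_lower_bound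
    {X : Type*} [MeasurableSpace X] (μ : Measure X)
    (n : ℕ) (hn : 5 ≤ n) (N : ℝ) (hN : N = 2 * n / (n - 4))
    (u : X → ℝ) (hu0 : ∀ x, 0 ≤ u x) (humeas : Measurable u)
    (huN : ∫ x, u x ^ N ∂μ = 1)
    (v₁ v₂ : X → ℝ) (hv₁ : MemLp v₁ (ENNReal.ofReal N) μ)
    (hv₂ : MemLp v₂ (ENNReal.ofReal N) μ)
    (hdisj : ∀ᵐ x ∂μ, v₁ x * v₂ x = 0)
    (hn₁ : ∫ x, u x ^ (N - 2) * (v₁ x) ^ 2 ∂μ = 1)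
    (hn₂ : ∫ x, u x ^ (N - 2) * (v₂ x) ^ 2 ∂μ = 1) :
    (2 : ℝ) ^ ((4 : ℝ) / n) ≤
      max ((eLpNorm v₁ (ENNReal.ofReal N) μ).toReal ^ 2)
          ((eLpNorm v₂ (ENNReal.ofReal N) μ).toReal ^ 2) := by
  have hn4 : (4 : ℝ) < n := by exact_mod_cast (by omega : 4 < n)
  have hN2 : 2 < N := by rw [hN, lt_div_iff₀ (by linarith)]; linarith
  have hexp : (N - 2) / N = 4 / n := by
    rw [hN]
    field_simp [(by linarith : (n : ℝ) - 4 ≠ 0)]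
    ring
  have huN_nonneg : ∀ x, 0 ≤ u x ^ N := fun x => Real.rpow_nonneg (hu0 x) N
  have huN_int : Integrable (fun x => u x ^ N) μ := .of_integral_ne_zero (by simp [huN])
  have hu : MemLp u (ENNReal.ofReal N) μ := by
    rw [← integrable_norm_rpow_iff humeas.aestronglyMeasurable
      (ENNReal.ofReal_pos.mpr (by linarith)).ne' ENNReal.ofReal_ne_top,
      ENNReal.toReal_ofReal (by linarith)]
    simpa [Real.norm_eq_abs, abs_of_nonneg (hu0 _)] using huN_int
  have hS₂ : NullMeasurableSet (support v₂) μ :=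
    hv₂.aestronglyMeasurable.aemeasurable.nullMeasurable (measurableSet_singleton 0).compl
  have hmass : ∫ x in support v₁, u x ^ N ∂μ + ∫ x in support v₂, u x ^ N ∂μ ≤ 1 :=
    huN ▸ setIntegral_add_setIntegral_le_integral huN_int (ae_of_all _ huN_nonneg)
      (aedisjoint_support_of_ae_mul_eq_zero hdisj) hS₂
  have h₁ := integral_rpow_mul_sq_le_on_support hN2 hu0 hu hv₁
  have h₂ := integral_rpow_mul_sq_le_on_support hN2 hu0 hu hv₂
  rw [hn₁, hexp] at h₁
  rw [hn₂, hexp] at h₂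
  exact two_rpow_le_max_of_add_le_one (by positivity) (integral_nonneg huN_nonneg)
    (integral_nonneg huN_nonneg) hmass h₁ h₂
end
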